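/- arXiv:1007.4695 — 3 statements merged into one kernel-verified Lean document; each statement's English description precedes it below -/
import Mathlib

section
/- Let D : G(d) → G(d) be a linear map with D(d) ⊆ d and D(h*) ⊆ h*, and write B := D|_d, A := D|_{h*}. Then D is a derivation of the Lie algebra G(d) that is skew-symmetric with respect to ⟨,⟩ if and only if: B is a derivation of d skew-symmetric with respect to ⟨,⟩_d, A is skew-symmetric with respect to the restriction of ⟨,⟩ to h*, and B∘π(h) − π(h)∘B = π(ℓ^{-1}(A(ℓ(h)))) for all h ∈ h. In particular, for every a ∈ h, the map μ(a)(x+ℓ(h)) := π(a)x + ℓ([a,h]_h) is a skew-symmetric derivation of G(d) of this form. -/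
/-!
Both the bracket and the form of `G(d) = d ⊕ h*` split along the decomposition, so for a map
`D = B ⊕ A` the derivation and skew-symmetry conditions separate into: `B` is a skew derivation of
`d`, `A` is skew on `h*`, and `A β(x,y) = β(Bx,y) + β(x,By)`. Evaluated at `h ∈ h`, skewness of `A`
turns `(Aα)(h)` into `-α(ℓ⁻¹Aℓh)` and skewness of `B` moves `B` to the first slot, so the last
condition reads `⟨B π(h)x - π(h)Bx - π(ℓ⁻¹Aℓh)x, y⟩_d = 0` for all `y`; by nondegeneracy this is
the commutator identity. For `μ(a)`, invariance of `⟨,⟩_h` makes `ℓ ∘ ad a ∘ ℓ⁻¹` skew, and `π`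
being a homomorphism gives the commutator identity.
-/

open Module

variable {H D : Type} [LieRing H] [LieAlgebra ℝ H] [FiniteDimensional ℝ H]
  [LieRing D] [LieAlgebra ℝ D] [FiniteDimensional ℝ D]

/-- `beta BD π x y` is the element `β(x,y)` of `h*` given by `a ↦ ⟨π(a)x, y⟩_d`. -/
def beta (BD : LinearMap.BilinForm ℝ D) (π : H →ₗ[ℝ] D →ₗ[ℝ] D) (x y : D) : Dual ℝ H :=
  (BD.flip y).comp (π.flip x)

/-- The bracket on `G(d) = d ⊕ h*`: `[x₁+α₁, x₂+α₂] = [x₁,x₂]_d + β(x₁,x₂)`. -/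
def gbr (BD : LinearMap.BilinForm ℝ D) (π : H →ₗ[ℝ] D →ₗ[ℝ] D)
    (u v : D × Dual ℝ H) : D × Dual ℝ H :=
  (⁅u.1, v.1⁆, beta BD π u.1 v.1)

/-- The inverse of the isomorphism `ℓ : h → h*`, `ℓ(h) = ⟨h,·⟩_h`. -/
noncomputable def ellInv (BH : LinearMap.BilinForm ℝ H) (hBH : BH.Nondegenerate)
    (α : Dual ℝ H) : H :=
  (LinearMap.BilinForm.toDual BH hBH).symm α

/-- The metric on `G(d)`: `⟨x₁ + ℓ(h₁), x₂ + ℓ(h₂)⟩ = ⟨h₁,h₂⟩_h + ⟨x₁,x₂⟩_d`. -/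
noncomputable def gform (BH : LinearMap.BilinForm ℝ H) (hBH : BH.Nondegenerate)
    (BD : LinearMap.BilinForm ℝ D) (u v : D × Dual ℝ H) : ℝ :=
  BD u.1 v.1 + BH (ellInv BH hBH u.2) (ellInv BH hBH v.2)

/-- The map `μ(a)(x + ℓ(h)) = π(a)x + ℓ([a,h]_h)`. -/
noncomputable def mu (BH : LinearMap.BilinForm ℝ H) (hBH : BH.Nondegenerate)
    (π : H →ₗ[ℝ] D →ₗ[ℝ] D) (a : H) (u : D × Dual ℝ H) : D × Dual ℝ H :=
  (π a u.1, BH ⁅a, ellInv BH hBH u.2⁆)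

section ell

variable (BH : LinearMap.BilinForm ℝ H) (hBH : BH.Nondegenerate)

lemma apply_ellInv (α : Dual ℝ H) (k : H) : BH (ellInv BH hBH α) k = α k :=
  LinearMap.BilinForm.apply_toDual_symm_apply α k

lemma ellInv_apply (h : H) : ellInv BH hBH (BH h) = h :=
  (LinearMap.BilinForm.toDual BH hBH).symm_apply_apply h

@[simp]
lemma ellInv_zero : ellInv BH hBH 0 = 0 :=
  map_zero (LinearMap.BilinForm.toDual BH hBH).symm

lemma apply_eq_neg_of_skew (A : Dual ℝ H →ₗ[ℝ] Dual ℝ H)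
    (hA : ∀ α α' : Dual ℝ H,
      BH (ellInv BH hBH (A α)) (ellInv BH hBH α') + BH (ellInv BH hBH α) (ellInv BH hBH (A α')) = 0)
    (α : Dual ℝ H) (h : H) : A α h = - α (ellInv BH hBH (A (BH h))) := by
  have h' := hA α (BH h)
  rw [ellInv_apply, apply_ellInv, apply_ellInv] at h'
  linarith

noncomputable def ellAd (a : H) : Dual ℝ H →ₗ[ℝ] Dual ℝ H :=
  (BH : H →ₗ[ℝ] Dual ℝ H) ∘ₗ LieAlgebra.ad ℝ H a ∘ₗ
    ((LinearMap.BilinForm.toDual BH hBH).symm : Dual ℝ H →ₗ[ℝ] H)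

lemma ellAd_apply (a : H) (α : Dual ℝ H) : ellAd BH hBH a α = BH ⁅a, ellInv BH hBH α⁆ := rfl

lemma ellAd_skew (hBHinv : ∀ a b c : H, BH ⁅a, b⁆ c = - BH b ⁅a, c⁆) (a : H)
    (α α' : Dual ℝ H) :
    BH (ellInv BH hBH (ellAd BH hBH a α)) (ellInv BH hBH α')
      + BH (ellInv BH hBH α) (ellInv BH hBH (ellAd BH hBH a α')) = 0 := by
  rw [ellAd_apply, ellAd_apply, ellInv_apply, ellInv_apply, hBHinv, neg_add_cancel]

end ell

section derivations

omit [FiniteDimensional ℝ D]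

variable (BH : LinearMap.BilinForm ℝ H) (hBH : BH.Nondegenerate)
  (BD : LinearMap.BilinForm ℝ D) (π : H →ₗ[ℝ] D →ₗ[ℝ] D)
  (B : D →ₗ[ℝ] D) (A : Dual ℝ H →ₗ[ℝ] Dual ℝ H)

lemma gform_skew_iff :
    (∀ u v : D × Dual ℝ H,
        gform BH hBH BD (B u.1, A u.2) v + gform BH hBH BD u (B v.1, A v.2) = 0) ↔
      (∀ x y : D, BD (B x) y + BD x (B y) = 0) ∧
      ∀ α α' : Dual ℝ H,
        BH (ellInv BH hBH (A α)) (ellInv BH hBH α')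
          + BH (ellInv BH hBH α) (ellInv BH hBH (A α')) = 0 := by
  refine ⟨fun hs => ⟨fun x y => ?_, fun α α' => ?_⟩, fun ⟨hB, hA⟩ u v => ?_⟩
  · simpa [gform] using hs (x, 0) (y, 0)
  · simpa [gform] using hs (0, α) (0, α')
  · simp only [gform]
    linarith [hB u.1 v.1, hA u.2 v.2]

omit [FiniteDimensional ℝ H] in
lemma gbr_derivation_iff :
    (∀ u v : D × Dual ℝ H,
        ((B (gbr BD π u v).1, A (gbr BD π u v).2) : D × Dual ℝ H)
          = gbr BD π (B u.1, A u.2) v + gbr BD π u (B v.1, A v.2)) ↔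
      (∀ x y : D, B ⁅x, y⁆ = ⁅B x, y⁆ + ⁅x, B y⁆) ∧
      ∀ x y : D, A (beta BD π x y) = beta BD π (B x) y + beta BD π x (B y) := by
  simp only [gbr, Prod.mk_add_mk, Prod.ext_iff]
  exact ⟨fun h => ⟨fun x y => (h (x, 0) (y, 0)).1, fun x y => (h (x, 0) (y, 0)).2⟩,
    fun ⟨h₁, h₂⟩ u v => ⟨h₁ u.1 v.1, h₂ u.1 v.1⟩⟩

variable {BH hBH BD π B A}

lemma beta_derivation_defect_apply
    (hB : ∀ x y : D, BD (B x) y + BD x (B y) = 0)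
    (hA : ∀ α α' : Dual ℝ H,
      BH (ellInv BH hBH (A α)) (ellInv BH hBH α') + BH (ellInv BH hBH α) (ellInv BH hBH (A α')) = 0)
    (x y : D) (h : H) :
    (A (beta BD π x y) - (beta BD π (B x) y + beta BD π x (B y))) h
      = BD (B (π h x) - π h (B x) - π (ellInv BH hBH (A (BH h))) x) y := by
  have hB' := hB (π h x) y
  simp only [LinearMap.sub_apply, LinearMap.add_apply, apply_eq_neg_of_skew BH hBH A hA, beta,
    LinearMap.comp_apply, LinearMap.BilinForm.flip_apply, LinearMap.flip_apply, map_sub] at hB' ⊢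
  linarith

lemma beta_derivation_iff (hBDnd : BD.Nondegenerate)
    (hB : ∀ x y : D, BD (B x) y + BD x (B y) = 0)
    (hA : ∀ α α' : Dual ℝ H,
      BH (ellInv BH hBH (A α)) (ellInv BH hBH α') + BH (ellInv BH hBH α) (ellInv BH hBH (A α')) = 0) :
    (∀ x y : D, A (beta BD π x y) = beta BD π (B x) y + beta BD π x (B y)) ↔
      ∀ (h : H) (x : D), B (π h x) - π h (B x) = π (ellInv BH hBH (A (BH h))) x := by
  simp_rw [← sub_eq_zero (b := π _ _), ← sub_eq_zero (a := A _), LinearMap.ext_iff,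
    LinearMap.zero_apply]
  constructor
  · intro hd h x
    refine hBDnd.1 _ fun y => ?_
    rw [← beta_derivation_defect_apply hB hA]
    exact hd x y h
  · intro hc x y h
    rw [beta_derivation_defect_apply hB hA, hc, map_zero, LinearMap.zero_apply]

lemma skew_derivation_iff (hBDnd : BD.Nondegenerate) :
    ((∀ u v : D × Dual ℝ H,
        ((B (gbr BD π u v).1, A (gbr BD π u v).2) : D × Dual ℝ H)
          = gbr BD π (B u.1, A u.2) v + gbr BD π u (B v.1, A v.2)) ∧
      ∀ u v : D × Dual ℝ H,
        gform BH hBH BD (B u.1, A u.2) v + gform BH hBH BD u (B v.1, A v.2) = 0) ↔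
      (∀ x y : D, B ⁅x, y⁆ = ⁅B x, y⁆ + ⁅x, B y⁆) ∧
      (∀ x y : D, BD (B x) y + BD x (B y) = 0) ∧
      (∀ α α' : Dual ℝ H,
        BH (ellInv BH hBH (A α)) (ellInv BH hBH α')
          + BH (ellInv BH hBH α) (ellInv BH hBH (A α')) = 0) ∧
      ∀ (h : H) (x : D), B (π h x) - π h (B x) = π (ellInv BH hBH (A (BH h))) x := by
  rw [gbr_derivation_iff, gform_skew_iff]
  constructor
  · rintro ⟨⟨hBder, hbeta⟩, hB, hA⟩
    exact ⟨hBder, hB, hA, (beta_derivation_iff hBDnd hB hA).1 hbeta⟩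
  · rintro ⟨hBder, hB, hA, hcomm⟩
    exact ⟨⟨hBder, (beta_derivation_iff hBDnd hB hA).2 hcomm⟩, hB, hA⟩

end derivations

theorem skew_symmetric_derivations_of_Gd_general
    (BH : LinearMap.BilinForm ℝ H)
    (hBHnd : BH.Nondegenerate)
    (hBHinv : ∀ a b c : H, BH ⁅a, b⁆ c = - BH b ⁅a, c⁆)
    (BD : LinearMap.BilinForm ℝ D)
    (hBDnd : BD.Nondegenerate)
    (π : H →ₗ[ℝ] D →ₗ[ℝ] D)
    (hπder : ∀ a : H, ∀ x y : D, π a ⁅x, y⁆ = ⁅π a x, y⁆ + ⁅x, π a y⁆)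
    (hπhom : ∀ a b : H, π ⁅a, b⁆ = π a ∘ₗ π b - π b ∘ₗ π a)
    (hπskew : ∀ a : H, ∀ x y : D, BD (π a x) y = - BD x (π a y))
    -- Dm is a linear map of G(d) with Dm(d) ⊆ d and Dm(h*) ⊆ h*,
    -- B = Dm|_d and A = Dm|_{h*}
    (Dm : (D × Dual ℝ H) →ₗ[ℝ] (D × Dual ℝ H))
    (B : D →ₗ[ℝ] D) (A : Dual ℝ H →ₗ[ℝ] Dual ℝ H)
    (hDm : ∀ u : D × Dual ℝ H, Dm u = (B u.1, A u.2)) :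
    -- Dm is a skew-symmetric derivation of G(d) ...
    (((∀ u v : D × Dual ℝ H, Dm (gbr BD π u v) = gbr BD π (Dm u) v + gbr BD π u (Dm v)) ∧
      (∀ u v : D × Dual ℝ H, gform BH hBHnd BD (Dm u) v + gform BH hBHnd BD u (Dm v) = 0))
    ↔
    -- ... iff B is a skew-symmetric derivation of d, A is skew-symmetric on h*, and
    -- B ∘ π(h) − π(h) ∘ B = π(ℓ⁻¹(A(ℓ(h)))) for all h ∈ h
    ((∀ x y : D, B ⁅x, y⁆ = ⁅B x, y⁆ + ⁅x, B y⁆) ∧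
     (∀ x y : D, BD (B x) y + BD x (B y) = 0) ∧
     (∀ α α' : Dual ℝ H,
       BH (ellInv BH hBHnd (A α)) (ellInv BH hBHnd α')
         + BH (ellInv BH hBHnd α) (ellInv BH hBHnd (A α')) = 0) ∧
     (∀ (h : H) (x : D), B (π h x) - π h (B x) = π (ellInv BH hBHnd (A (BH h))) x))) ∧
    -- in particular each μ(a) is a skew-symmetric derivation of G(d)
    (∀ a : H,
      (∀ u v : D × Dual ℝ H,
        mu BH hBHnd π a (gbr BD π u v)
          = gbr BD π (mu BH hBHnd π a u) v + gbr BD π u (mu BH hBHnd π a v)) ∧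
      (∀ u v : D × Dual ℝ H,
        gform BH hBHnd BD (mu BH hBHnd π a u) v
          + gform BH hBHnd BD u (mu BH hBHnd π a v) = 0)) := by
  refine ⟨by simpa only [hDm] using skew_derivation_iff hBDnd, fun a => ?_⟩
  have hμ (u : D × Dual ℝ H) : mu BH hBHnd π a u = (π a u.1, ellAd BH hBHnd a u.2) := rfl
  simp only [hμ]
  refine (skew_derivation_iff hBDnd).2
    ⟨hπder a, fun x y => by rw [hπskew, neg_add_cancel], ellAd_skew BH hBHnd hBHinv a,
      fun h x => ?_⟩
  rw [ellAd_apply, ellInv_apply, ellInv_apply, hπhom]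
  rfl

/-- Characterization of the skew-symmetric derivations of `G(d)` preserving the
splitting `d ⊕ h*`; in particular each `μ(a)`, `a ∈ h`, is such a derivation. -/
theorem skew_symmetric_derivations_of_Gd
    (BH : LinearMap.BilinForm ℝ H)
    (hBHsymm : ∀ a b : H, BH a b = BH b a)
    (hBHnd : BH.Nondegenerate)
    (hBHinv : ∀ a b c : H, BH ⁅a, b⁆ c = - BH b ⁅a, c⁆)
    (BD : LinearMap.BilinForm ℝ D)
    (hBDsymm : ∀ x y : D, BD x y = BD y x)
    (hBDnd : BD.Nondegenerate)
    (hBDinv : ∀ x y z : D, BD ⁅x, y⁆ z = - BD y ⁅x, z⁆)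
    (π : H →ₗ[ℝ] D →ₗ[ℝ] D)
    (hπder : ∀ a : H, ∀ x y : D, π a ⁅x, y⁆ = ⁅π a x, y⁆ + ⁅x, π a y⁆)
    (hπhom : ∀ a b : H, π ⁅a, b⁆ = π a ∘ₗ π b - π b ∘ₗ π a)
    (hπskew : ∀ a : H, ∀ x y : D, BD (π a x) y = - BD x (π a y))
    -- Dm is a linear map of G(d) with Dm(d) ⊆ d and Dm(h*) ⊆ h*,
    -- B = Dm|_d and A = Dm|_{h*}
    (Dm : (D × Dual ℝ H) →ₗ[ℝ] (D × Dual ℝ H))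
    (B : D →ₗ[ℝ] D) (A : Dual ℝ H →ₗ[ℝ] Dual ℝ H)
    (hDm : ∀ u : D × Dual ℝ H, Dm u = (B u.1, A u.2)) :
    -- Dm is a skew-symmetric derivation of G(d) ...
    (((∀ u v : D × Dual ℝ H, Dm (gbr BD π u v) = gbr BD π (Dm u) v + gbr BD π u (Dm v)) ∧
      (∀ u v : D × Dual ℝ H, gform BH hBHnd BD (Dm u) v + gform BH hBHnd BD u (Dm v) = 0))
    ↔
    -- ... iff B is a skew-symmetric derivation of d, A is skew-symmetric on h*, and
    -- B ∘ π(h) − π(h) ∘ B = π(ℓ⁻¹(A(ℓ(h)))) for all h ∈ h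
    ((∀ x y : D, B ⁅x, y⁆ = ⁅B x, y⁆ + ⁅x, B y⁆) ∧
     (∀ x y : D, BD (B x) y + BD x (B y) = 0) ∧
     (∀ α α' : Dual ℝ H,
       BH (ellInv BH hBHnd (A α)) (ellInv BH hBHnd α')
         + BH (ellInv BH hBHnd α) (ellInv BH hBHnd (A α')) = 0) ∧
     (∀ (h : H) (x : D), B (π h x) - π h (B x) = π (ellInv BH hBHnd (A (BH h))) x))) ∧
    -- in particular each μ(a) is a skew-symmetric derivation of G(d)
    (∀ a : H,
      (∀ u v : D × Dual ℝ H,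
        mu BH hBHnd π a (gbr BD π u v)
          = gbr BD π (mu BH hBHnd π a u) v + gbr BD π u (mu BH hBHnd π a v)) ∧
      (∀ u v : D × Dual ℝ H,
        gform BH hBHnd BD (mu BH hBHnd π a u) v
          + gform BH hBHnd BD u (mu BH hBHnd π a v) = 0)) :=
  skew_symmetric_derivations_of_Gd_general BH hBHnd hBHinv BD hBDnd π hπder hπhom hπskew Dm B A hDm
end

section
/- The Lie algebra n is 2-step nilpotent (i.e. [n,n] ≠ 0 and [n,[n,n]] = 0), its center equals R·z ⊕ ker A, and if A is invertible then n is isomorphic to the Heisenberg Lie algebra h_{2s+1} with 2s = p+q, i.e. the (2s+1)-dimensional Lie algebra with basis X_1,…,X_s, Y_1,…,Y_s, Z whose only nonzero brackets among basis vectors are [X_i, Y_i] = Z. -/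
/-!
All brackets are multiples of the central vector `z`, so `n` is at most 2-step nilpotent. Since
`⟨,⟩_{p,q}` is nondegenerate, `[x, ·] ≠ 0` as soon as `Ax ≠ 0`, and skew-symmetry of `A` makes
`[·, x] = 0` equivalent to `[x, ·] = 0`; this gives `[n,n] ≠ 0` and the centre. When `A` is
invertible, `ω(x, y) = ⟨Ax, y⟩_{p,q}` is a nondegenerate alternating form; splitting off
hyperbolic planes (`ω x y = 1`) one at a time gives Darboux coordinates in which
`ω = ∑ᵢ (xᵢ y'ᵢ - x'ᵢ yᵢ)`, which is the Heisenberg bracket.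
-/

/-- The standard symmetric bilinear form of signature `(p,q)` on `ℝ^{p+q}`. -/
def formPQ (p q : ℕ) (x y : Fin (p + q) → ℝ) : ℝ :=
  ∑ i : Fin (p + q), (if (i : ℕ) < p then (1 : ℝ) else -1) * x i * y i

/-- The bracket of `n = ℝ^{p,q} ⊕ ℝ·z`: `[x, y] = ⟨Ax, y⟩_{p,q}·z` with `z` central,
where an element of `n` is a pair (vector in `ℝ^{p+q}`, coefficient of `z`). -/
def nbr (p q : ℕ) (A : (Fin (p + q) → ℝ) →ₗ[ℝ] (Fin (p + q) → ℝ))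
    (u v : (Fin (p + q) → ℝ) × ℝ) : (Fin (p + q) → ℝ) × ℝ :=
  (0, formPQ p q (A u.1) v.1)

/-- The bracket of the Heisenberg Lie algebra `h_{2s+1}` on basis
`X₁,…,X_s, Y₁,…,Y_s, Z` with only nonzero brackets `[Xᵢ, Yᵢ] = Z`. -/
def heisBr (s : ℕ) (u v : (Fin s → ℝ) × (Fin s → ℝ) × ℝ) :
    (Fin s → ℝ) × (Fin s → ℝ) × ℝ :=
  (0, 0, ∑ i, (u.1 i * v.2.1 i - v.1 i * u.2.1 i))

open Module

namespace LinearMap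

section CommRing

variable {R M : Type*} [CommRing R] [AddCommGroup M] [Module R M] {B : M →ₗ[R] M →ₗ[R] R}
  {A : M →ₗ[R] M}

theorem IsSymm.isAlt_comp [IsAddTorsionFree R] (hB : B.IsSymm)
    (hA : ∀ x y, B (A x) y = -B x (A y)) : (B ∘ₗ A).IsAlt := fun x => by
  have h := hA x x
  rw [← hB.eq (A x) x, RingHom.id_apply] at h
  exact self_eq_neg.mp h

theorem SeparatingLeft.comp_of_injective (hB : B.SeparatingLeft) (hA : Function.Injective A) :
    (B ∘ₗ A).SeparatingLeft := fun x hx =>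
  hA <| by rw [hB (A x) hx, map_zero]

end CommRing

section Field

variable {K V : Type*} [Field K] [AddCommGroup V] [Module K V]

theorem SeparatingLeft.exists_apply_eq_one [Nontrivial V] {B : V →ₗ[K] V →ₗ[K] K}
    (hB : B.SeparatingLeft) : ∃ x y, B x y = 1 := by
  obtain ⟨x, hx⟩ := exists_ne (0 : V)
  obtain ⟨y, hy⟩ : ∃ y, B x y ≠ 0 := by
    by_contra! h
    exact hx (hB x h)
  exact ⟨x, (B x y)⁻¹ • y, by rw [map_smul, smul_eq_mul, inv_mul_cancel₀ hy]⟩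

/-- The projection of `V` onto the `B`-orthogonal complement of the plane spanned by a
hyperbolic pair `x, y` (i.e. `B x y = 1`) along that plane. -/
def hyperbolicProj (B : V →ₗ[K] V →ₗ[K] K) (x y : V) : V →ₗ[K] V :=
  LinearMap.id - (B x).smulRight y + (B y).smulRight x

/-- `K × K × (Kˢ × Kˢ) ≃ Kˢ⁺¹ × Kˢ⁺¹`, `(a, b, u, u') ↦ (Fin.cons a u, Fin.cons b u')`. -/
def consPairEquiv (s : ℕ) :
    (K × K × ((Fin s → K) × (Fin s → K))) ≃ₗ[K] (Fin (s + 1) → K) × (Fin (s + 1) → K) :=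
  (LinearEquiv.prodAssoc K K K _).symm.trans <|
    (LinearEquiv.prodProdProdComm K K K _ _).trans <|
      (Fin.consLinearEquiv K fun _ => K).prodCongr (Fin.consLinearEquiv K fun _ => K)

namespace IsAlt

variable {B : V →ₗ[K] V →ₗ[K] K} {x y : V}

theorem apply_eq_neg_one_of_apply_eq_one (hB : B.IsAlt) (hxy : B x y = 1) : B y x = -1 := by
  rw [← hB.neg, hxy]

theorem hyperbolicProj_mem (hB : B.IsAlt) (hxy : B x y = 1) (v : V) :
    hyperbolicProj B x y v ∈ ker (B x) ⊓ ker (B y) := by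
  simp [hyperbolicProj, hxy, hB.apply_eq_neg_one_of_apply_eq_one hxy, hB.self_eq_zero]

theorem hyperbolicProj_of_mem {w : V} (hw : w ∈ ker (B x) ⊓ ker (B y)) :
    hyperbolicProj B x y w = w := by
  simp_all [hyperbolicProj]

theorem apply_eq_add_hyperbolicProj (hB : B.IsAlt) (hxy : B x y = 1) (a b : V) :
    B a b = B x a * B y b - B x b * B y a +
      B (hyperbolicProj B x y a) (hyperbolicProj B x y b) := by
  simp only [hyperbolicProj, sub_apply, add_apply, id_apply, smulRight_apply, map_sub, map_add,
    map_smul, smul_apply, smul_eq_mul, hB.self_eq_zero, hxy,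
    hB.apply_eq_neg_one_of_apply_eq_one hxy, ← hB.neg y a, ← hB.neg x a]
  ring

def hyperbolicSplit (hB : B.IsAlt) (hxy : B x y = 1) :
    V ≃ₗ[K] K × K × ↥(ker (B x) ⊓ ker (B y)) where
  toFun v := (B x v, B y v, ⟨hyperbolicProj B x y v, hB.hyperbolicProj_mem hxy v⟩)
  invFun t := t.1 • y - t.2.1 • x + t.2.2
  map_add' v w := by simp
  map_smul' c v := by simp
  left_inv v := by simp [hyperbolicProj]
  right_inv t := by
    obtain ⟨a, b, w, hw⟩ := t
    obtain ⟨hwx, hwy⟩ : B x w = 0 ∧ B y w = 0 := by simpa using hw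
    ext <;> simp [hyperbolicProj, hB.self_eq_zero, hxy, hB.apply_eq_neg_one_of_apply_eq_one hxy,
      hwx, hwy]
    module

theorem isAlt_domRestrict₁₂ (hB : B.IsAlt) (W : Submodule K V) : (B.domRestrict₁₂ W W).IsAlt :=
  fun w => hB w

theorem separatingLeft_domRestrict₁₂_hyperbolic (hB : B.IsAlt) (hB' : B.SeparatingLeft)
    (hxy : B x y = 1) :
    (B.domRestrict₁₂ (ker (B x) ⊓ ker (B y)) (ker (B x) ⊓ ker (B y))).SeparatingLeft := by
  rintro ⟨w, hw⟩ hw'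
  obtain ⟨hwx, hwy⟩ : B x w = 0 ∧ B y w = 0 := by simpa using hw
  refine Subtype.ext (hB' w fun v => ?_)
  rw [hB.apply_eq_add_hyperbolicProj hxy, hyperbolicProj_of_mem hw, hwx, hwy]
  simpa [domRestrict₁₂_apply] using hw' ⟨_, hB.hyperbolicProj_mem hxy v⟩

variable {s : ℕ}

def symplecticEquivCons (hB : B.IsAlt) (hxy : B x y = 1)
    (ψ : ↥(ker (B x) ⊓ ker (B y)) ≃ₗ[K] (Fin s → K) × (Fin s → K)) :
    V ≃ₗ[K] (Fin (s + 1) → K) × (Fin (s + 1) → K) :=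
  (hB.hyperbolicSplit hxy).trans <|
    ((LinearEquiv.refl K K).prodCongr ((LinearEquiv.refl K K).prodCongr ψ)).trans
      (consPairEquiv s)

theorem symplecticEquivCons_apply (hB : B.IsAlt) (hxy : B x y = 1)
    (ψ : ↥(ker (B x) ⊓ ker (B y)) ≃ₗ[K] (Fin s → K) × (Fin s → K)) (v : V) :
    hB.symplecticEquivCons hxy ψ v =
      (Fin.cons (B x v) (ψ ⟨_, hB.hyperbolicProj_mem hxy v⟩).1,
        Fin.cons (B y v) (ψ ⟨_, hB.hyperbolicProj_mem hxy v⟩).2) :=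
  rfl

theorem apply_eq_symplecticEquivCons (hB : B.IsAlt) (hxy : B x y = 1)
    {ψ : ↥(ker (B x) ⊓ ker (B y)) ≃ₗ[K] (Fin s → K) × (Fin s → K)}
    (hψ : ∀ a b, B.domRestrict₁₂ _ _ a b = (ψ a).1 ⬝ᵥ (ψ b).2 - (ψ b).1 ⬝ᵥ (ψ a).2) (a b : V) :
    B a b = (hB.symplecticEquivCons hxy ψ a).1 ⬝ᵥ (hB.symplecticEquivCons hxy ψ b).2 -
      (hB.symplecticEquivCons hxy ψ b).1 ⬝ᵥ (hB.symplecticEquivCons hxy ψ a).2 := by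
  have hP := hψ ⟨_, hB.hyperbolicProj_mem hxy a⟩ ⟨_, hB.hyperbolicProj_mem hxy b⟩
  rw [domRestrict₁₂_apply] at hP
  rw [hB.apply_eq_add_hyperbolicProj hxy, hP]
  simp only [symplecticEquivCons_apply, dotProduct, Fin.sum_univ_succ, Fin.cons_zero,
    Fin.cons_succ]
  ring

theorem exists_symplectic_equiv [FiniteDimensional K V] (hB : B.IsAlt) (hB' : B.SeparatingLeft) :
    ∃ s, finrank K V = 2 * s ∧ ∃ φ : V ≃ₗ[K] (Fin s → K) × (Fin s → K),
      ∀ a b, B a b = (φ a).1 ⬝ᵥ (φ b).2 - (φ b).1 ⬝ᵥ (φ a).2 := by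
  induction hn : finrank K V using Nat.strong_induction_on generalizing V with
  | _ n ih =>
    rcases subsingleton_or_nontrivial V with hV | hV
    · refine ⟨0, by rw [← hn, finrank_zero_of_subsingleton], LinearEquiv.ofSubsingleton _ _,
        fun a b => ?_⟩
      simp [Subsingleton.elim a 0]
    obtain ⟨x, y, hxy⟩ := hB'.exists_apply_eq_one
    have hW : finrank K ↥(ker (B x) ⊓ ker (B y)) + 2 = n := by
      rw [← hn, (hB.hyperbolicSplit hxy).finrank_eq, finrank_prod, finrank_prod, finrank_self]
      ring
    obtain ⟨s, hs, ψ, hψ⟩ := ih _ (by omega) (hB.isAlt_domRestrict₁₂ _)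
      (hB.separatingLeft_domRestrict₁₂_hyperbolic hB' hxy) rfl
    exact ⟨s + 1, by omega, hB.symplecticEquivCons hxy ψ, hB.apply_eq_symplecticEquivCons hxy hψ⟩

end IsAlt

end Field

end LinearMap

noncomputable def formPQBilin (p q : ℕ) : (Fin (p + q) → ℝ) →ₗ[ℝ] (Fin (p + q) → ℝ) →ₗ[ℝ] ℝ :=
  Matrix.toLinearMap₂' ℝ (Matrix.diagonal fun i : Fin (p + q) => if (i : ℕ) < p then 1 else -1)

theorem formPQBilin_apply (p q : ℕ) (x y : Fin (p + q) → ℝ) :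
    formPQBilin p q x y = formPQ p q x y := by
  simp only [formPQBilin, Matrix.toLinearMap₂'_apply', dotProduct, Matrix.mulVec_diagonal, formPQ]
  exact Finset.sum_congr rfl fun i _ => by ring

theorem isSymm_formPQBilin (p q : ℕ) : (formPQBilin p q).IsSymm :=
  ⟨fun x y => by
    simp only [RingHom.id_apply, formPQBilin_apply, formPQ]
    exact Finset.sum_congr rfl fun i _ => by ring⟩

theorem separatingLeft_formPQBilin (p q : ℕ) : (formPQBilin p q).SeparatingLeft :=
  LinearMap.separatingLeft_toLinearMap₂'_of_det_ne_zero' <| by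
    simp only [Matrix.det_diagonal, Finset.prod_ne_zero_iff]
    intro i _
    split_ifs <;> norm_num

section nbr

variable {p q : ℕ} {A : (Fin (p + q) → ℝ) →ₗ[ℝ] (Fin (p + q) → ℝ)}

theorem nbr_eq_zero_iff {u v : (Fin (p + q) → ℝ) × ℝ} :
    nbr p q A u v = 0 ↔ formPQBilin p q (A u.1) v.1 = 0 := by
  simp [nbr, Prod.ext_iff, formPQBilin_apply]

theorem exists_nbr_ne_zero (hA : A ≠ 0) : ∃ u v, nbr p q A u v ≠ 0 := by
  obtain ⟨x, hx⟩ : ∃ x, A x ≠ 0 := by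
    by_contra! h
    exact hA (LinearMap.ext h)
  obtain ⟨y, hy⟩ : ∃ y, formPQBilin p q (A x) y ≠ 0 := by
    by_contra! h
    exact hx (separatingLeft_formPQBilin p q _ h)
  exact ⟨(x, 0), (y, 0), nbr_eq_zero_iff.not.mpr hy⟩

theorem nbr_nbr_eq_zero (u v w : (Fin (p + q) → ℝ) × ℝ) : nbr p q A u (nbr p q A v w) = 0 :=
  nbr_eq_zero_iff.mpr (map_zero _)

theorem forall_nbr_eq_zero_iff
    (hAskew : ∀ x y : Fin (p + q) → ℝ, formPQ p q (A x) y = - formPQ p q x (A y))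
    (u : (Fin (p + q) → ℝ) × ℝ) :
    (∀ v, nbr p q A u v = 0 ∧ nbr p q A v u = 0) ↔ A u.1 = 0 := by
  refine ⟨fun h => separatingLeft_formPQBilin p q _ fun y => nbr_eq_zero_iff.mp (h (y, 0)).1,
    fun hu v => ⟨?_, ?_⟩⟩
  · rw [nbr_eq_zero_iff, hu, map_zero, LinearMap.zero_apply]
  · rw [nbr_eq_zero_iff, formPQBilin_apply, hAskew, ← formPQBilin_apply, hu, map_zero, neg_zero]

theorem exists_linearEquiv_nbr_heisBr
    (hAskew : ∀ x y : Fin (p + q) → ℝ, formPQ p q (A x) y = - formPQ p q x (A y))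
    (hA : Function.Injective A) :
    ∃ s : ℕ, p + q = 2 * s ∧
      ∃ e : ((Fin (p + q) → ℝ) × ℝ) ≃ₗ[ℝ] ((Fin s → ℝ) × (Fin s → ℝ) × ℝ),
        ∀ u v, e (nbr p q A u v) = heisBr s (e u) (e v) := by
  have hskew : ∀ x y, formPQBilin p q (A x) y = -formPQBilin p q x (A y) := by
    simpa only [formPQBilin_apply] using hAskew
  obtain ⟨s, hs, φ, hφ⟩ := ((isSymm_formPQBilin p q).isAlt_comp hskew).exists_symplectic_equiv
    ((separatingLeft_formPQBilin p q).comp_of_injective hA)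
  refine ⟨s, by rwa [finrank_fin_fun] at hs,
    (φ.prodCongr (LinearEquiv.refl ℝ ℝ)).trans (LinearEquiv.prodAssoc ℝ _ _ ℝ), fun u v => ?_⟩
  have hω := hφ u.1 v.1
  rw [LinearMap.comp_apply, formPQBilin_apply, dotProduct, dotProduct,
    ← Finset.sum_sub_distrib] at hω
  simp [nbr, heisBr, hω]

end nbr

/-- The Lie algebra `G(ℝ^{p,q})` is 2-step nilpotent, its center is `ℝ·z ⊕ ker A`,
and if `A` is nonsingular it is isomorphic to the Heisenberg Lie algebra `h_{2s+1}`
with `2s = p + q`. -/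
theorem G_Rpq_two_step_nilpotent_and_heisenberg
    (p q : ℕ) (A : (Fin (p + q) → ℝ) →ₗ[ℝ] (Fin (p + q) → ℝ))
    (hA : A ≠ 0)
    (hAskew : ∀ x y : Fin (p + q) → ℝ, formPQ p q (A x) y = - formPQ p q x (A y)) :
    -- 2-step nilpotent: [n,n] ≠ 0 and [n,[n,n]] = 0
    (∃ u v : (Fin (p + q) → ℝ) × ℝ, nbr p q A u v ≠ 0) ∧
    (∀ u v w : (Fin (p + q) → ℝ) × ℝ, nbr p q A u (nbr p q A v w) = 0) ∧
    -- the center equals ℝ·z ⊕ ker A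
    (∀ u : (Fin (p + q) → ℝ) × ℝ,
      (∀ v : (Fin (p + q) → ℝ) × ℝ, nbr p q A u v = 0 ∧ nbr p q A v u = 0) ↔ A u.1 = 0) ∧
    -- if A is nonsingular then n ≅ h_{2s+1} with 2s = p + q
    (Function.Bijective A →
      ∃ s : ℕ, p + q = 2 * s ∧
        ∃ e : ((Fin (p + q) → ℝ) × ℝ) ≃ₗ[ℝ] ((Fin s → ℝ) × (Fin s → ℝ) × ℝ),
          ∀ u v : (Fin (p + q) → ℝ) × ℝ,
            e (nbr p q A u v) = heisBr s (e u) (e v)) :=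
  ⟨exists_nbr_ne_zero hA, nbr_nbr_eq_zero, forall_nbr_eq_zero_iff hAskew,
    fun hA' => exists_linearEquiv_nbr_heisBr hAskew hA'.injective⟩
end

section
/- Write D^0(a) = a, D^i(a) = [a, D^{i-1}(a)] for the lower central series of a Lie algebra a. Then: (i) for every i ≥ 1, D^i(G(d)) ⊆ D^i(d) ⊕ h*; (ii) if d is nilpotent with D^k(d) = 0, then D^{k+1}(G(d)) = 0, so G(d) is nilpotent of step at most k+1; (iii) under the hypothesis D^k(d) = 0, one has D^k(G(d)) = 0 if and only if D^{k-1}(d) ⊆ ∩_{h∈h} ker π(h), i.e. π(h)x = 0 for all h ∈ h and x ∈ D^{k-1}(d). -/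
open Module

variable {H D : Type} [LieRing H] [LieAlgebra ℝ H] [FiniteDimensional ℝ H]
  [LieRing D] [LieAlgebra ℝ D] [FiniteDimensional ℝ D]

/-- The subspace spanned by all brackets `br u v`, `u ∈ S`, `v ∈ T`. -/
def bspan {X : Type} [AddCommGroup X] [Module ℝ X] (br : X → X → X)
    (S T : Submodule ℝ X) : Submodule ℝ X :=
  Submodule.span ℝ {z | ∃ u ∈ S, ∃ v ∈ T, z = br u v}

/-- The lower central series: `D⁰(a) = a`, `Dⁱ(a) = [a, Dⁱ⁻¹(a)]`. -/
def lcsF {X : Type} [AddCommGroup X] [Module ℝ X] (br : X → X → X) : ℕ → Submodule ℝ X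
  | 0 => ⊤
  | (i + 1) => bspan br ⊤ (lcsF br i)

/- The projection `G(d) → d` is a surjective bracket homomorphism, so it maps `Dⁱ(G(d))` onto
`Dⁱ(d)`; this is (i). A bracket `[u, v]` of `G(d)` only depends on the `d`-components `u₁, v₁`, so
it vanishes once `v₁ ∈ Dᵏ(d) = 0`, which gives (ii). Since `β(u₁, v₁)(h) = -⟨u₁, π(h)v₁⟩_d`, the
`h*`-components `β(u₁, v₁)` all vanish exactly when `π(h)v₁ = 0` for all `h`; when `Dᵏ(d) = 0` these
are the only possibly nonzero parts of the brackets spanning `Dᵏ(G(d))`, which gives (iii). -/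

section LowerCentralSeries

variable {X Y : Type} [AddCommGroup X] [Module ℝ X] [AddCommGroup Y] [Module ℝ Y]

theorem lcsF_succ_le_iff (br : X → X → X) (i : ℕ) (S : Submodule ℝ X) :
    lcsF br (i + 1) ≤ S ↔ ∀ u, ∀ v ∈ lcsF br i, br u v ∈ S := by
  rw [lcsF, bspan, Submodule.span_le]
  constructor
  · intro h u v hv
    exact h ⟨u, trivial, v, hv, rfl⟩
  · rintro h _ ⟨u, -, v, hv, rfl⟩
    exact h u v hv

theorem mem_lcsF_succ (br : X → X → X) {i : ℕ} (u : X) {v : X} (hv : v ∈ lcsF br i) :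
    br u v ∈ lcsF br (i + 1) :=
  (lcsF_succ_le_iff br i _).1 le_rfl u v hv

theorem lcsF_succ_eq_bot_iff (br : X → X → X) (i : ℕ) :
    lcsF br (i + 1) = ⊥ ↔ ∀ u, ∀ v ∈ lcsF br i, br u v = 0 := by
  simp only [eq_bot_iff, lcsF_succ_le_iff, Submodule.mem_bot]

theorem map_lcsF_of_surjective {brX : X → X → X} {brY : Y → Y → Y} (f : X →ₗ[ℝ] Y)
    (hf : Function.Surjective f) (hbr : ∀ u v, f (brX u v) = brY (f u) (f v)) :
    ∀ i, (lcsF brX i).map f = lcsF brY i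
  | 0 => by rw [lcsF, lcsF, Submodule.map_top, LinearMap.range_eq_top.2 hf]
  | i + 1 => by
    have ih := map_lcsF_of_surjective f hf hbr i
    refine le_antisymm ?_ ?_
    · rw [Submodule.map_le_iff_le_comap, lcsF_succ_le_iff]
      intro u v hv
      rw [Submodule.mem_comap, hbr]
      exact mem_lcsF_succ brY (f u) (ih ▸ Submodule.mem_map_of_mem hv)
    · rw [lcsF_succ_le_iff]
      intro u' v' hv'
      obtain ⟨u, rfl⟩ := hf u'
      obtain ⟨v, hv, rfl⟩ := ih ▸ hv'
      exact ⟨brX u v, mem_lcsF_succ brX u hv, hbr u v⟩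

end LowerCentralSeries

section DoubleExtension

variable {𝔥 𝔡 : Type} [LieRing 𝔥] [LieAlgebra ℝ 𝔥] [LieRing 𝔡] [LieAlgebra ℝ 𝔡]
  (BD : LinearMap.BilinForm ℝ 𝔡) (π : 𝔥 →ₗ[ℝ] 𝔡 →ₗ[ℝ] 𝔡)

theorem map_fst_lcsF_gbr (i : ℕ) :
    (lcsF (gbr BD π) i).map (LinearMap.fst ℝ 𝔡 (Dual ℝ 𝔥)) = lcsF (fun x y : 𝔡 => ⁅x, y⁆) i :=
  map_lcsF_of_surjective _ LinearMap.fst_surjective (fun _ _ => rfl) i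

theorem lcsF_gbr_le_prod (i : ℕ) :
    lcsF (gbr BD π) i ≤ (lcsF (fun x y : 𝔡 => ⁅x, y⁆) i).prod ⊤ := by
  rw [← map_fst_lcsF_gbr BD π i]
  exact fun v hv => ⟨Submodule.mem_map_of_mem hv, trivial⟩

theorem gbr_eq_zero_iff (u v : 𝔡 × Dual ℝ 𝔥) :
    gbr BD π u v = 0 ↔ ⁅u.1, v.1⁆ = 0 ∧ beta BD π u.1 v.1 = 0 :=
  Prod.ext_iff

theorem forall_beta_eq_zero_iff (hBD : BD.SeparatingRight)
    (hπskew : ∀ a : 𝔥, ∀ x y : 𝔡, BD (π a x) y = - BD x (π a y)) (y : 𝔡) :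
    (∀ x, beta BD π x y = 0) ↔ ∀ a, π a y = 0 := by
  have hbeta : ∀ x a, beta BD π x y a = - BD x (π a y) := fun x a => hπskew a x y
  constructor
  · intro h a
    refine hBD _ fun x => ?_
    simpa [h x] using hbeta x a
  · intro h x
    ext a
    simp [hbeta, h a]

theorem lcsF_gbr_succ_eq_bot {k : ℕ} (hk : lcsF (fun x y : 𝔡 => ⁅x, y⁆) k = ⊥) :
    lcsF (gbr BD π) (k + 1) = ⊥ := by
  rw [lcsF_succ_eq_bot_iff]
  intro u v hv
  have hv₁ : v.1 = 0 := by simpa [hk] using (lcsF_gbr_le_prod BD π k hv).1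
  rw [gbr_eq_zero_iff, hv₁]
  exact ⟨lie_zero _, by simp [beta]⟩

theorem lcsF_gbr_succ_eq_bot_iff (hBD : BD.SeparatingRight)
    (hπskew : ∀ a : 𝔥, ∀ x y : 𝔡, BD (π a x) y = - BD x (π a y)) {m : ℕ}
    (hm : lcsF (fun x y : 𝔡 => ⁅x, y⁆) (m + 1) = ⊥) :
    lcsF (gbr BD π) (m + 1) = ⊥ ↔
      ∀ a : 𝔥, ∀ x ∈ lcsF (fun x y : 𝔡 => ⁅x, y⁆) m, π a x = 0 := by
  have hfst : ∀ u : 𝔡 × Dual ℝ 𝔥, ∀ v ∈ lcsF (gbr BD π) m, ⁅u.1, v.1⁆ = 0 := fun u v hv =>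
    (lcsF_succ_eq_bot_iff _ m).1 hm u.1 v.1 (lcsF_gbr_le_prod BD π m hv).1
  calc lcsF (gbr BD π) (m + 1) = ⊥
      ↔ ∀ u : 𝔡 × Dual ℝ 𝔥, ∀ v ∈ lcsF (gbr BD π) m, beta BD π u.1 v.1 = 0 := by
        rw [lcsF_succ_eq_bot_iff]
        exact forall_congr' fun u => forall₂_congr fun v hv => by
          rw [gbr_eq_zero_iff, and_iff_right (hfst u v hv)]
    _ ↔ ∀ x ∈ lcsF (fun x y : 𝔡 => ⁅x, y⁆) m, ∀ w, beta BD π w x = 0 := by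
        constructor
        · intro h x hx w
          obtain ⟨v, hv, rfl⟩ := (map_fst_lcsF_gbr BD π m).symm ▸ hx
          exact h (w, 0) v hv
        · intro h u v hv
          exact h v.1 (lcsF_gbr_le_prod BD π m hv).1 u.1
    _ ↔ ∀ a : 𝔥, ∀ x ∈ lcsF (fun x y : 𝔡 => ⁅x, y⁆) m, π a x = 0 := by
        simp only [forall_beta_eq_zero_iff BD π hBD hπskew]
        exact ⟨fun h a x hx => h x hx a, fun h x hx a => h a x hx⟩

end DoubleExtension

theorem Gd_nilpotency_general
    (BD : LinearMap.BilinForm ℝ D)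
    (hBDnd : BD.Nondegenerate)
    (π : H →ₗ[ℝ] D →ₗ[ℝ] D)
    (hπskew : ∀ a : H, ∀ x y : D, BD (π a x) y = - BD x (π a y)) :
    -- (i) Dⁱ(G(d)) ⊆ Dⁱ(d) ⊕ h* for i ≥ 1
    (∀ i : ℕ, 1 ≤ i →
      lcsF (gbr BD π) i ≤ (lcsF (fun x y : D => ⁅x, y⁆) i).prod (⊤ : Submodule ℝ (Dual ℝ H))) ∧
    -- (ii) if Dᵏ(d) = 0 then D^{k+1}(G(d)) = 0
    (∀ k : ℕ, lcsF (fun x y : D => ⁅x, y⁆) k = ⊥ → lcsF (gbr BD π) (k + 1) = ⊥) ∧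
    -- (iii) if Dᵏ(d) = 0 (k ≥ 1) then Dᵏ(G(d)) = 0 ↔ D^{k-1}(d) ⊆ ∩_h ker π(h)
    (∀ k : ℕ, 1 ≤ k → lcsF (fun x y : D => ⁅x, y⁆) k = ⊥ →
      (lcsF (gbr BD π) k = ⊥ ↔
        ∀ a : H, ∀ x ∈ lcsF (fun x y : D => ⁅x, y⁆) (k - 1), π a x = 0)) := by
  refine ⟨fun i _ => lcsF_gbr_le_prod BD π i, fun k => lcsF_gbr_succ_eq_bot BD π, ?_⟩
  rintro (_ | m) hm hk
  · omega
  · exact lcsF_gbr_succ_eq_bot_iff BD π hBDnd.2 hπskew hk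

/-- Nilpotency of `G(d)`: `Dⁱ(G(d)) ⊆ Dⁱ(d) ⊕ h*`; if `d` is `k`-step nilpotent then
`G(d)` is at most `(k+1)`-step nilpotent, and it is `k`-step nilpotent iff
`D^{k-1}(d) ⊆ ∩_{h} ker π(h)`. -/
theorem Gd_nilpotency
    (BH : LinearMap.BilinForm ℝ H)
    (hBHsymm : ∀ a b : H, BH a b = BH b a)
    (hBHnd : BH.Nondegenerate)
    (hBHinv : ∀ a b c : H, BH ⁅a, b⁆ c = - BH b ⁅a, c⁆)
    (BD : LinearMap.BilinForm ℝ D)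
    (hBDsymm : ∀ x y : D, BD x y = BD y x)
    (hBDnd : BD.Nondegenerate)
    (hBDinv : ∀ x y z : D, BD ⁅x, y⁆ z = - BD y ⁅x, z⁆)
    (π : H →ₗ[ℝ] D →ₗ[ℝ] D)
    (hπder : ∀ a : H, ∀ x y : D, π a ⁅x, y⁆ = ⁅π a x, y⁆ + ⁅x, π a y⁆)
    (hπhom : ∀ a b : H, π ⁅a, b⁆ = π a ∘ₗ π b - π b ∘ₗ π a)
    (hπskew : ∀ a : H, ∀ x y : D, BD (π a x) y = - BD x (π a y)) :
    -- (i) Dⁱ(G(d)) ⊆ Dⁱ(d) ⊕ h* for i ≥ 1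
    (∀ i : ℕ, 1 ≤ i →
      lcsF (gbr BD π) i ≤ (lcsF (fun x y : D => ⁅x, y⁆) i).prod (⊤ : Submodule ℝ (Dual ℝ H))) ∧
    -- (ii) if Dᵏ(d) = 0 then D^{k+1}(G(d)) = 0
    (∀ k : ℕ, lcsF (fun x y : D => ⁅x, y⁆) k = ⊥ → lcsF (gbr BD π) (k + 1) = ⊥) ∧
    -- (iii) if Dᵏ(d) = 0 (k ≥ 1) then Dᵏ(G(d)) = 0 ↔ D^{k-1}(d) ⊆ ∩_h ker π(h)
    (∀ k : ℕ, 1 ≤ k → lcsF (fun x y : D => ⁅x, y⁆) k = ⊥ →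
      (lcsF (gbr BD π) k = ⊥ ↔
        ∀ a : H, ∀ x ∈ lcsF (fun x y : D => ⁅x, y⁆) (k - 1), π a x = 0)) :=
  Gd_nilpotency_general BD hBDnd π hπskew
end
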